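/- Let ψ be a bijective Jordan triple map from the triangular algebra T = Tri(A,M,B) onto an arbitrary ring R', where A satisfies (i) and B satisfies (ii). Then for any t11 ∈ T11, a11 ∈ T11, b12, c12 ∈ T12, and d22 ∈ T22, ψ(t11·a11·b12 + t11·c12·d22) = ψ(t11·a11·b12) + ψ(t11·c12·d22). -/
import Mathlib


/-- The triangular algebra `Tri(A, M, B)`: formal matrices `[[a, m], [0, b]]` with
`a ∈ A`, `m ∈ M`, `b ∈ B`, under the usual matrix operations. -/
@[ext]
structure Tri (A M B : Type*) where
  a : A
  m : M
  b : B

namespace Tri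

variable {A M B : Type*}

section AddGroup

variable [AddCommGroup A] [AddCommGroup M] [AddCommGroup B]

instance : Add (Tri A M B) := ⟨fun x y => ⟨x.a + y.a, x.m + y.m, x.b + y.b⟩⟩
instance : Zero (Tri A M B) := ⟨⟨0, 0, 0⟩⟩
instance : Neg (Tri A M B) := ⟨fun x => ⟨-x.a, -x.m, -x.b⟩⟩

@[simp] theorem add_a (x y : Tri A M B) : (x + y).a = x.a + y.a := rfl
@[simp] theorem add_m (x y : Tri A M B) : (x + y).m = x.m + y.m := rfl
@[simp] theorem add_b (x y : Tri A M B) : (x + y).b = x.b + y.b := rfl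
@[simp] theorem zero_a : (0 : Tri A M B).a = 0 := rfl
@[simp] theorem zero_m : (0 : Tri A M B).m = 0 := rfl
@[simp] theorem zero_b : (0 : Tri A M B).b = 0 := rfl
@[simp] theorem neg_a (x : Tri A M B) : (-x).a = -x.a := rfl
@[simp] theorem neg_m (x : Tri A M B) : (-x).m = -x.m := rfl
@[simp] theorem neg_b (x : Tri A M B) : (-x).b = -x.b := rfl

instance : AddCommGroup (Tri A M B) where
  add_assoc x y z := by ext <;> simp [add_assoc]
  zero_add x := by ext <;> simp
  add_zero x := by ext <;> simp
  nsmul := nsmulRec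
  zsmul := zsmulRec
  neg_add_cancel x := by ext <;> simp
  add_comm x y := by ext <;> simp [add_comm]

end AddGroup

section Mul

variable [NonUnitalRing A] [NonUnitalRing B] [AddCommGroup M]
  [SMul A M] [SMul Bᵐᵒᵖ M]

/-- Multiplication of formal upper-triangular matrices:
`[[a, m], [0, b]] * [[a', m'], [0, b']] = [[a * a', a • m' + m • b'], [0, b * b']]`,
where `m • b'` is the right action of `B`, encoded via `Bᵐᵒᵖ`. -/
instance : Mul (Tri A M B) :=
  ⟨fun x y => ⟨x.a * y.a, x.a • y.m + MulOpposite.op y.b • x.m, x.b * y.b⟩⟩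

end Mul

/-- The embedding of `A` as the corner `T₁₁` of the triangular algebra. -/
def e11 [Zero M] [Zero B] (a : A) : Tri A M B := ⟨a, 0, 0⟩

/-- The embedding of `M` as the corner `T₁₂` of the triangular algebra. -/
def e12 [Zero A] [Zero B] (m : M) : Tri A M B := ⟨0, m, 0⟩

/-- The embedding of `B` as the corner `T₂₂` of the triangular algebra. -/
def e22 [Zero A] [Zero M] (b : B) : Tri A M B := ⟨0, 0, b⟩

end Tri

/-- `M` is an `(A, B)`-bimodule (left `A`-action, right `B`-action encoded via `Bᵐᵒᵖ`)
compatible with the `R`-module structures, where `A` and `B` are (possibly non-unital)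
algebras over the commutative ring `R`. -/
class TriBimodule (R A M B : Type*) [CommRing R]
    [NonUnitalRing A] [NonUnitalRing B] [AddCommGroup M]
    [Module R A] [Module R B] [Module R M]
    [SMul A M] [SMul Bᵐᵒᵖ M] : Prop where
  smul_add_left : ∀ (a : A) (m m' : M), a • (m + m') = a • m + a • m'
  add_smul_left : ∀ (a a' : A) (m : M), (a + a') • m = a • m + a' • m
  mul_smul_left : ∀ (a a' : A) (m : M), (a * a') • m = a • (a' • m)
  smul_add_right : ∀ (b : Bᵐᵒᵖ) (m m' : M), b • (m + m') = b • m + b • m'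
  add_smul_right : ∀ (b b' : Bᵐᵒᵖ) (m : M), (b + b') • m = b • m + b' • m
  mul_smul_right : ∀ (b b' : Bᵐᵒᵖ) (m : M), (b * b') • m = b • (b' • m)
  smul_smul_comm : ∀ (a : A) (b : Bᵐᵒᵖ) (m : M), a • (b • m) = b • (a • m)
  rsmul_smul_left : ∀ (r : R) (a : A) (m : M), (r • a) • m = r • (a • m)
  rsmul_smul_right : ∀ (r : R) (b : Bᵐᵒᵖ) (m : M), (r • b) • m = r • (b • m)


section AuxSimp

variable {A M B : Type*}

section
variable [NonUnitalRing A] [NonUnitalRing B] [AddCommGroup M] [SMul A M] [SMul Bᵐᵒᵖ M]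

@[simp] theorem Tri.mulA (x y : Tri A M B) : (x * y).a = x.a * y.a := rfl
@[simp] theorem Tri.mulM (x y : Tri A M B) :
    (x * y).m = x.a • y.m + MulOpposite.op y.b • x.m := rfl
@[simp] theorem Tri.mulB (x y : Tri A M B) : (x * y).b = x.b * y.b := rfl
end

section
variable [Zero A] [Zero M] [Zero B]
@[simp] theorem Tri.e11A (a : A) : (Tri.e11 a : Tri A M B).a = a := rfl
@[simp] theorem Tri.e11M (a : A) : (Tri.e11 a : Tri A M B).m = 0 := rfl
@[simp] theorem Tri.e11B (a : A) : (Tri.e11 a : Tri A M B).b = 0 := rfl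
@[simp] theorem Tri.e12A (m : M) : (Tri.e12 m : Tri A M B).a = 0 := rfl
@[simp] theorem Tri.e12M (m : M) : (Tri.e12 m : Tri A M B).m = m := rfl
@[simp] theorem Tri.e12B (m : M) : (Tri.e12 m : Tri A M B).b = 0 := rfl
@[simp] theorem Tri.e22A (b : B) : (Tri.e22 b : Tri A M B).a = 0 := rfl
@[simp] theorem Tri.e22M (b : B) : (Tri.e22 b : Tri A M B).m = 0 := rfl
@[simp] theorem Tri.e22B (b : B) : (Tri.e22 b : Tri A M B).b = b := rfl
end

end AuxSimp

theorem jordanTriple_claim4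
    {R A M B R' : Type*} [CommRing R]
    [NonUnitalRing A] [NonUnitalRing B] [AddCommGroup M]
    [Module R A] [Module R B] [Module R M]
    [SMulCommClass R A A] [IsScalarTower R A A]
    [SMulCommClass R B B] [IsScalarTower R B B]
    [SMul A M] [SMul Bᵐᵒᵖ M] [TriBimodule R A M B]
    (hfaithA : ∀ a : A, (∀ m : M, a • m = 0) → a = 0)
    (hfaithB : ∀ b : B, (∀ m : M, MulOpposite.op b • m = 0) → b = 0)
    (hA₁ : ∀ a : A, (∀ x : A, a * x = 0) → a = 0)
    (hA₂ : ∀ a : A, (∀ x : A, x * a = 0) → a = 0)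
    (hB₁ : ∀ b : B, (∀ y : B, b * y = 0) → b = 0)
    (hB₂ : ∀ b : B, (∀ y : B, y * b = 0) → b = 0)
    [Ring R'] (ψ : Tri A M B → R')
    (hbij : Function.Bijective ψ)
    (htriple : ∀ x y z : Tri A M B, ψ (x * y * z + z * y * x) = ψ x * ψ y * ψ z + ψ z * ψ y * ψ x) :
    ∀ (t a : A) (m m' : M) (b : B), ψ ((Tri.e11 t : Tri A M B) * Tri.e11 a * Tri.e12 m + (Tri.e11 t : Tri A M B) * Tri.e12 m' * Tri.e22 b) = ψ ((Tri.e11 t : Tri A M B) * Tri.e11 a * Tri.e12 m) + ψ ((Tri.e11 t : Tri A M B) * Tri.e12 m' * Tri.e22 b) := by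
  intro t a m m' b
  obtain ⟨hinj, hsurj⟩ := hbij
  -- basic smul facts derived from the bimodule axioms
  have h0l : ∀ n : M, (0 : A) • n = 0 := by
    intro n
    have h : (0 : A) • n = (0 : A) • n + (0 : A) • n := by
      simpa using (TriBimodule.add_smul_left (R := R) (B := B) (0 : A) 0 n)
    exact (left_eq_add.mp h)
  have hl0 : ∀ x : A, x • (0 : M) = 0 := by
    intro x
    have h : x • (0 : M) = x • (0 : M) + x • (0 : M) := by
      simpa using (TriBimodule.smul_add_left (R := R) (B := B) x (0 : M) 0)
    exact (left_eq_add.mp h)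
  have h0r : ∀ n : M, (0 : Bᵐᵒᵖ) • n = 0 := by
    intro n
    have h : (0 : Bᵐᵒᵖ) • n = (0 : Bᵐᵒᵖ) • n + (0 : Bᵐᵒᵖ) • n := by
      simpa using (TriBimodule.add_smul_right (R := R) (A := A) (0 : Bᵐᵒᵖ) 0 n)
    exact (left_eq_add.mp h)
  have hr0 : ∀ c : Bᵐᵒᵖ, c • (0 : M) = 0 := by
    intro c
    have h : c • (0 : M) = c • (0 : M) + c • (0 : M) := by
      simpa using (TriBimodule.smul_add_right (R := R) (A := A) c (0 : M) 0)
    exact (left_eq_add.mp h)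
  have hnegr : ∀ (c : Bᵐᵒᵖ) (n : M), (-c) • n = -(c • n) := by
    intro c n
    have h := TriBimodule.add_smul_right (R := R) (A := A) c (-c) n
    rw [add_neg_cancel, h0r] at h
    exact (neg_eq_of_add_eq_zero_right h.symm).symm
  have hsubr : ∀ (c d : Bᵐᵒᵖ) (n : M), (c - d) • n = c • n - d • n := by
    intro c d n
    rw [sub_eq_add_neg, TriBimodule.add_smul_right (R := R) (A := A), hnegr,
      ← sub_eq_add_neg]
  have hsneg : ∀ (c : Bᵐᵒᵖ) (x : M), c • (-x) = -(c • x) := by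
    intro c x
    have h := TriBimodule.smul_add_right (R := R) (A := A) c x (-x)
    rw [add_neg_cancel, hr0] at h
    exact (neg_eq_of_add_eq_zero_right h.symm).symm
  have hssub : ∀ (c : Bᵐᵒᵖ) (x y : M), c • (x - y) = c • x - c • y := by
    intro c x y
    rw [sub_eq_add_neg, TriBimodule.smul_add_right (R := R) (A := A), hsneg,
      ← sub_eq_add_neg]
  -- ψ 0 = 0
  obtain ⟨x₀, hx₀⟩ := hsurj 0
  have hψ0 : ψ 0 = 0 := by
    have h := htriple 0 x₀ 0
    have hz : (0 : Tri A M B) * x₀ * 0 + 0 * x₀ * 0 = 0 := by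
      ext <;> simp [h0l, hl0, h0r, hr0]
    rw [hz, hx₀] at h
    simpa using h
  have tridist1 : ∀ p q x y : R', p * (x + y) * q + q * (x + y) * p
      = (p * x * q + q * x * p) + (p * y * q + q * y * p) := by
    intros; noncomm_ring
  have tridist2 : ∀ p q x y : R', (x + y) * p * q + q * p * (x + y)
      = (x * p * q + q * p * x) + (y * p * q + q * p * y) := by
    intros; noncomm_ring
  have tridist3 : ∀ p q x y : R', p * q * (x + y) + (x + y) * q * p
      = (p * q * x + x * q * p) + (p * q * y + y * q * p) := by
    intros; noncomm_ring
  -- the preimage of ψ(e12 m) + ψ(e22 b)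
  obtain ⟨w, hw⟩ := hsurj (ψ (Tri.e12 m : Tri A M B) + ψ (Tri.e22 b : Tri A M B))
  -- w.a = 0
  have hα : w.a = 0 := by
    refine hA₂ _ fun s => hfaithA _ fun n => ?_
    have G1 := htriple (Tri.e11 s : Tri A M B) w (Tri.e12 n)
    have G2 := htriple (Tri.e11 s : Tri A M B) (Tri.e12 m) (Tri.e12 n)
    have G3 := htriple (Tri.e11 s : Tri A M B) (Tri.e22 b) (Tri.e12 n)
    have E1 : (Tri.e11 s : Tri A M B) * w * Tri.e12 n + Tri.e12 n * w * Tri.e11 s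
        = Tri.e12 ((s * w.a) • n) := by
      ext <;> simp [h0l, hl0, h0r, hr0]
    have E2 : (Tri.e11 s : Tri A M B) * Tri.e12 m * Tri.e12 n
        + Tri.e12 n * Tri.e12 m * Tri.e11 s = 0 := by
      ext <;> simp [h0l, hl0, h0r, hr0]
    have E3 : (Tri.e11 s : Tri A M B) * Tri.e22 b * Tri.e12 n
        + Tri.e12 n * Tri.e22 b * Tri.e11 s = 0 := by
      ext <;> simp [h0l, hl0, h0r, hr0]
    rw [E1] at G1
    rw [E2, hψ0] at G2
    rw [E3, hψ0] at G3
    have key : ψ (Tri.e12 ((s * w.a) • n) : Tri A M B) = ψ (0 : Tri A M B) := by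
      rw [G1, hw, tridist1, ← G2, ← G3, hψ0, add_zero]
    have := congrArg Tri.m (hinj key)
    simpa using this
  -- w.b = b
  have hβ : w.b = b := by
    have hc : ∀ (c : B) (n : M),
        MulOpposite.op c • (MulOpposite.op w.b • n)
          = MulOpposite.op c • (MulOpposite.op b • n) := by
      intro c n
      have G1 := htriple (Tri.e12 n : Tri A M B) w (Tri.e22 c)
      have G2 := htriple (Tri.e12 n : Tri A M B) (Tri.e12 m) (Tri.e22 c)
      have G3 := htriple (Tri.e12 n : Tri A M B) (Tri.e22 b) (Tri.e22 c)
      have E1 : (Tri.e12 n : Tri A M B) * w * Tri.e22 c + Tri.e22 c * w * Tri.e12 n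
          = Tri.e12 (MulOpposite.op c • (MulOpposite.op w.b • n)) := by
        ext <;> simp [h0l, hl0, h0r, hr0]
      have E2 : (Tri.e12 n : Tri A M B) * Tri.e12 m * Tri.e22 c
          + Tri.e22 c * Tri.e12 m * Tri.e12 n = 0 := by
        ext <;> simp [h0l, hl0, h0r, hr0]
      have E3 : (Tri.e12 n : Tri A M B) * Tri.e22 b * Tri.e22 c
          + Tri.e22 c * Tri.e22 b * Tri.e12 n
          = Tri.e12 (MulOpposite.op c • (MulOpposite.op b • n)) := by
        ext <;> simp [h0l, hl0, h0r, hr0]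
      rw [E1] at G1
      rw [E2, hψ0] at G2
      rw [E3] at G3
      have key : ψ (Tri.e12 (MulOpposite.op c • (MulOpposite.op w.b • n)) : Tri A M B)
          = ψ (Tri.e12 (MulOpposite.op c • (MulOpposite.op b • n)) : Tri A M B) := by
        rw [G1, hw, tridist1, ← G2, zero_add]
        exact G3.symm
      have := congrArg Tri.m (hinj key)
      simpa using this
    have hsub : ∀ c : B, (w.b - b) * c = 0 := by
      intro c
      refine hfaithB _ fun n => ?_
      calc MulOpposite.op ((w.b - b) * c) • n
          = (MulOpposite.op c * MulOpposite.op (w.b - b)) • n := by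
            rw [← MulOpposite.op_mul]
        _ = MulOpposite.op c • (MulOpposite.op (w.b - b) • n) :=
            TriBimodule.mul_smul_right (R := R) (A := A) _ _ _
        _ = MulOpposite.op c • ((MulOpposite.op w.b - MulOpposite.op b) • n) := by
            rw [MulOpposite.op_sub]
        _ = MulOpposite.op c • (MulOpposite.op w.b • n - MulOpposite.op b • n) := by
            rw [hsubr]
        _ = MulOpposite.op c • (MulOpposite.op w.b • n)
              - MulOpposite.op c • (MulOpposite.op b • n) := hssub _ _ _
        _ = 0 := by rw [hc c n, sub_self]
    have := hB₁ _ hsub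
    exact sub_eq_zero.mp this
  -- (t*a) • w.m = (t*a) • m
  have hμ : (t * a) • w.m = (t * a) • m := by
    have K1 := htriple w (Tri.e11 a : Tri A M B) (Tri.e11 t)
    have K2 := htriple (Tri.e12 m : Tri A M B) (Tri.e11 a) (Tri.e11 t)
    have K3 := htriple (Tri.e22 b : Tri A M B) (Tri.e11 a) (Tri.e11 t)
    have F1 : w * (Tri.e11 a : Tri A M B) * Tri.e11 t + Tri.e11 t * Tri.e11 a * w
        = Tri.e12 ((t * a) • w.m) := by
      ext <;> simp [hα, h0l, hl0, h0r, hr0]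
    have F2 : (Tri.e12 m : Tri A M B) * Tri.e11 a * Tri.e11 t
        + Tri.e11 t * Tri.e11 a * Tri.e12 m = Tri.e12 ((t * a) • m) := by
      ext <;> simp [h0l, hl0, h0r, hr0]
    have F3 : (Tri.e22 b : Tri A M B) * Tri.e11 a * Tri.e11 t
        + Tri.e11 t * Tri.e11 a * Tri.e22 b = 0 := by
      ext <;> simp [h0l, hl0, h0r, hr0]
    rw [F1] at K1
    rw [F2] at K2
    rw [F3, hψ0] at K3
    have key : ψ (Tri.e12 ((t * a) • w.m) : Tri A M B)
        = ψ (Tri.e12 ((t * a) • m) : Tri A M B) := by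
      rw [K1, hw, tridist2, ← K2, ← K3, add_zero]
    have := congrArg Tri.m (hinj key)
    simpa using this
  -- final computation
  have hx : (Tri.e11 t : Tri A M B) * Tri.e11 a * Tri.e12 m = Tri.e12 ((t * a) • m) := by
    ext <;> simp [h0l, hl0, h0r, hr0]
  have hy : (Tri.e11 t : Tri A M B) * Tri.e12 m' * Tri.e22 b
      = Tri.e12 (MulOpposite.op b • (t • m')) := by
    ext <;> simp [h0l, hl0, h0r, hr0]
  have hadd : ∀ u v : M, (Tri.e12 u + Tri.e12 v : Tri A M B) = Tri.e12 (u + v) := by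
    intro u v; ext <;> simp [Tri.e12]
  set S : Tri A M B := Tri.e11 a + Tri.e12 m' with hS
  have H1 := htriple (Tri.e11 t : Tri A M B) S w
  have H2 := htriple (Tri.e11 t : Tri A M B) S (Tri.e12 m)
  have H3 := htriple (Tri.e11 t : Tri A M B) S (Tri.e22 b)
  have E0 : (Tri.e11 t : Tri A M B) * S * w + w * S * Tri.e11 t
      = Tri.e12 ((t * a) • w.m + MulOpposite.op b • (t • m')) := by
    ext <;> simp [hS, hα, hβ, h0l, hl0, h0r, hr0]
  have E2 : (Tri.e11 t : Tri A M B) * S * Tri.e12 m + Tri.e12 m * S * Tri.e11 t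
      = Tri.e12 ((t * a) • m) := by
    ext <;> simp [hS, h0l, hl0, h0r, hr0]
  have E3 : (Tri.e11 t : Tri A M B) * S * Tri.e22 b + Tri.e22 b * S * Tri.e11 t
      = Tri.e12 (MulOpposite.op b • (t • m')) := by
    ext <;> simp [hS, h0l, hl0, h0r, hr0]
  rw [hμ] at E0
  rw [E0] at H1
  rw [E2] at H2
  rw [E3] at H3
  rw [hx, hy, hadd, H1, hw, tridist3, ← H2, ← H3]
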